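/- Let (X, μ) be a finite measure space, γ > 0, and (u_ε) measurable with c_ε = sup_X |u_ε| → ∞ and λ_ε = ∫ u_ε² e^{γ u_ε²} dμ. Suppose for every τ ∈ (0,1), ∫_X e^{γ·min(u_ε, τ c_ε)²} dμ → μ(X) as ε → 0, and suppose lim_ε ∫_X e^{γ u_ε²} dμ = S > μ(X). Then liminf_{ε→0} λ_ε/c_ε² ≥ S - μ(X) > 0; in particular c_ε/λ_ε → 0. -/

import Mathlib

open MeasureTheory Real Filter Set Topology

/-
On `{u ≤ τc}` the integrand `e^{γu²}` equals its truncation, and on `{u > τc}` it is at most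
`u² e^{γu²} / (τc)²`. Hence `τ² (∫ e^{γu²} - ∫ e^{γ min(u, τc)²}) ≤ λ / c²`, whose left side tends
to `τ² (S - μ(X))`, while `λ / c² ≤ ∫ e^{γu²}` stays bounded; so `liminf λ / c² ≥ τ² (S - μ(X))`
for every `τ < 1`, and `τ → 1` gives the bound. It forces `λ ≳ c²`, whence `c / λ → 0`.
-/

lemma sq_min_le_sq {a t : ℝ} (ht : 0 ≤ t) : min a t ^ 2 ≤ a ^ 2 := by
  rw [← sq_abs a]
  exact sq_le_sq' (le_min (neg_abs_le a) (by linarith [abs_nonneg a]))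
    ((min_le_left a t).trans (le_abs_self a))

lemma sq_mul_sub_exp_min_le (γ : ℝ) {a t : ℝ} (ht : 0 ≤ t) :
    t ^ 2 * (exp (γ * a ^ 2) - exp (γ * min a t ^ 2)) ≤ a ^ 2 * exp (γ * a ^ 2) := by
  rcases le_or_gt a t with hat | hta
  · rw [min_eq_left hat, sub_self, mul_zero]
    positivity
  · calc t ^ 2 * (exp (γ * a ^ 2) - exp (γ * min a t ^ 2))
        ≤ t ^ 2 * exp (γ * a ^ 2) :=
          mul_le_mul_of_nonneg_left (sub_le_self _ (exp_pos _).le) (sq_nonneg t)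
      _ ≤ a ^ 2 * exp (γ * a ^ 2) :=
          mul_le_mul_of_nonneg_right (pow_le_pow_left₀ ht hta.le 2) (exp_pos _).le

section Integrals

variable {X : Type*} [MeasurableSpace X] {μ : Measure X} {f : X → ℝ} {γ t : ℝ}

lemma integrable_exp_mul_min_sq (hγ : 0 ≤ γ) (hf : AEMeasurable f μ)
    (hexp : Integrable (fun x => exp (γ * f x ^ 2)) μ) (ht : 0 ≤ t) :
    Integrable (fun x => exp (γ * min (f x) t ^ 2)) μ :=
  hexp.mono' ((((hf.min aemeasurable_const).pow_const 2).const_mul γ).exp.aestronglyMeasurable)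
    (Eventually.of_forall fun x => by
      rw [norm_of_nonneg (exp_pos _).le]
      exact exp_le_exp.2 (mul_le_mul_of_nonneg_left (sq_min_le_sq ht) hγ))

lemma sq_mul_sub_integral_exp_min_le (hγ : 0 ≤ γ) (hf : AEMeasurable f μ)
    (hexp : Integrable (fun x => exp (γ * f x ^ 2)) μ)
    (hsq : Integrable (fun x => f x ^ 2 * exp (γ * f x ^ 2)) μ) (ht : 0 ≤ t) :
    t ^ 2 * (∫ x, exp (γ * f x ^ 2) ∂μ - ∫ x, exp (γ * min (f x) t ^ 2) ∂μ) ≤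
      ∫ x, f x ^ 2 * exp (γ * f x ^ 2) ∂μ := by
  have htrunc := integrable_exp_mul_min_sq hγ hf hexp ht
  rw [← integral_sub hexp htrunc, ← integral_const_mul]
  exact integral_mono ((hexp.sub htrunc).const_mul _) hsq fun x => sq_mul_sub_exp_min_le γ ht

lemma integral_sq_mul_le_sq_mul_integral {g : X → ℝ} {C : ℝ} (hg : 0 ≤ g)
    (hfg : Integrable (fun x => f x ^ 2 * g x) μ) (hgi : Integrable g μ)
    (hf : ∀ x, |f x| ≤ C) :
    ∫ x, f x ^ 2 * g x ∂μ ≤ C ^ 2 * ∫ x, g x ∂μ := by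
  rw [← integral_const_mul]
  exact integral_mono hfg (hgi.const_mul _) fun x =>
    mul_le_mul_of_nonneg_right (sq_le_sq.2 ((hf x).trans (le_abs_self C))) (hg x)

end Integrals

section Sequences

variable {α : Type*} {l : Filter α}

lemma sub_le_liminf_of_sq_mul_sub_le [l.NeBot] {I v : α → ℝ} {T : ℝ → α → ℝ} {S M : ℝ}
    (hI : Tendsto I l (𝓝 S)) (hT : ∀ τ ∈ Ioo (0 : ℝ) 1, Tendsto (T τ) l (𝓝 M))
    (hv : IsCoboundedUnder (· ≥ ·) l v)
    (hle : ∀ τ ∈ Ioo (0 : ℝ) 1, ∀ᶠ a in l, τ ^ 2 * (I a - T τ a) ≤ v a) :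
    S - M ≤ liminf v l := by
  have hτ : ∀ τ ∈ Ioo (0 : ℝ) 1, τ ^ 2 * (S - M) ≤ liminf v l := fun τ hτ => by
    have hlim := (hI.sub (hT τ hτ)).const_mul (τ ^ 2)
    rw [← hlim.liminf_eq]
    exact liminf_le_liminf (hle τ hτ) hlim.isBoundedUnder_ge hv
  have hτ_one : Tendsto (fun τ : ℝ => τ ^ 2 * (S - M)) (𝓝[<] 1) (𝓝 (S - M)) :=
    tendsto_nhdsWithin_of_tendsto_nhds <| (by fun_prop : Continuous fun τ : ℝ => τ ^ 2 * (S - M)).tendsto' 1 _ (by simp)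
  exact le_of_tendsto hτ_one (eventually_of_mem (Ioo_mem_nhdsLT one_pos) hτ)

lemma tendsto_div_nhds_zero_of_liminf_div_sq_pos {J c : α → ℝ} (hc : Tendsto c l atTop)
    (hbdd : IsBoundedUnder (· ≥ ·) l (fun a => J a / c a ^ 2))
    (hpos : 0 < liminf (fun a => J a / c a ^ 2) l) :
    Tendsto (fun a => c a / J a) l (𝓝 0) := by
  obtain ⟨k, hk, hk_lt⟩ := exists_between hpos
  have hbound : ∀ᶠ a in l, 0 ≤ c a / J a ∧ c a / J a ≤ (k * c a)⁻¹ := by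
    filter_upwards [eventually_lt_of_lt_liminf hk_lt hbdd, hc.eventually_gt_atTop 0]
      with a hka hca
    have hJ : k * c a ^ 2 < J a := (lt_div_iff₀ (by positivity)).1 hka
    have hkc : 0 < k * c a ^ 2 := by positivity
    refine ⟨div_nonneg hca.le (hkc.trans hJ).le, ?_⟩
    calc c a / J a ≤ c a / (k * c a ^ 2) := div_le_div_of_nonneg_left hca.le hkc hJ.le
      _ = (k * c a)⁻¹ := by field_simp
  exact tendsto_of_tendsto_of_tendsto_of_le_of_le' tendsto_const_nhds
    (hc.const_mul_atTop hk).inv_tendsto_atTop (hbound.mono fun _ h => h.1)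
    (hbound.mono fun _ h => h.2)

end Sequences

theorem stmt_18_general {X : Type*} [MeasurableSpace X] (μ : Measure X) [IsFiniteMeasure μ]
    (γ S : ℝ) (hγ : 0 < γ)
    (u : ℕ → X → ℝ) (c : ℕ → ℝ)
    (hmeas : ∀ n, Measurable (u n))
    (hc : Tendsto c atTop atTop) (hcsup : ∀ n x, |u n x| ≤ c n)
    (hint1 : ∀ n, Integrable (fun x => Real.exp (γ * (u n x) ^ 2)) μ)
    (hint2 : ∀ n, Integrable (fun x => (u n x) ^ 2 * Real.exp (γ * (u n x) ^ 2)) μ)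
    (htrunc : ∀ τ : ℝ, τ ∈ Set.Ioo (0 : ℝ) 1 →
      Tendsto (fun n => ∫ x, Real.exp (γ * (min (u n x) (τ * c n)) ^ 2) ∂μ) atTop
        (nhds (μ Set.univ).toReal))
    (hS : Tendsto (fun n => ∫ x, Real.exp (γ * (u n x) ^ 2) ∂μ) atTop (nhds S))
    (hSgt : (μ Set.univ).toReal < S) :
    S - (μ Set.univ).toReal ≤
        Filter.liminf (fun n =>
          (∫ x, (u n x) ^ 2 * Real.exp (γ * (u n x) ^ 2) ∂μ) / (c n) ^ 2) atTop ∧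
      Tendsto (fun n =>
          c n / ∫ x, (u n x) ^ 2 * Real.exp (γ * (u n x) ^ 2) ∂μ) atTop (nhds 0) := by
  set I : ℕ → ℝ := fun n => ∫ x, exp (γ * u n x ^ 2) ∂μ
  set J : ℕ → ℝ := fun n => ∫ x, u n x ^ 2 * exp (γ * u n x ^ 2) ∂μ
  have hc_pos : ∀ᶠ n in atTop, 0 < c n := hc.eventually_gt_atTop 0
  have hsplit : ∀ τ ∈ Ioo (0 : ℝ) 1, ∀ᶠ n in atTop,
      τ ^ 2 * (I n - ∫ x, exp (γ * min (u n x) (τ * c n) ^ 2) ∂μ) ≤ J n / c n ^ 2 :=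
    fun τ hτ => hc_pos.mono fun n hn => by
      rw [le_div_iff₀ (by positivity)]
      have := sq_mul_sub_integral_exp_min_le hγ.le (hmeas n).aemeasurable (hint1 n) (hint2 n)
        (mul_pos hτ.1 hn).le
      linarith
  have hJ_le_I : ∀ᶠ n in atTop, J n / c n ^ 2 ≤ I n := hc_pos.mono fun n hn => by
    rw [div_le_iff₀ (by positivity), mul_comm]
    exact integral_sq_mul_le_sq_mul_integral (fun x => (exp_pos _).le) (hint2 n) (hint1 n)
      (hcsup n)
  have hliminf : S - (μ univ).toReal ≤ liminf (fun n => J n / c n ^ 2) atTop :=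
    sub_le_liminf_of_sq_mul_sub_le hS htrunc
      (hS.isBoundedUnder_le.mono_le hJ_le_I).isCoboundedUnder_ge hsplit
  refine ⟨hliminf, tendsto_div_nhds_zero_of_liminf_div_sq_pos hc ?_ (by linarith)⟩
  exact isBoundedUnder_of_eventually_ge (Eventually.of_forall fun n =>
    div_nonneg (integral_nonneg fun x => by positivity) (sq_nonneg _))

/-- abstract form of Lemma 2.9: if the truncated exponential integrals tend to
μ(X) while the full exponential integrals tend to S > μ(X), then
liminf λ_ε/c_ε² ≥ S - μ(X) > 0, and in particular c_ε/λ_ε → 0. -/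
theorem stmt_18 {X : Type*} [MeasurableSpace X] (μ : Measure X) [IsFiniteMeasure μ]
    (γ S : ℝ) (hγ : 0 < γ)
    (u : ℕ → X → ℝ) (c : ℕ → ℝ)
    (hmeas : ∀ n, Measurable (u n)) (hnonneg : ∀ n x, 0 ≤ u n x)
    (hc : Tendsto c atTop atTop) (hcsup : ∀ n x, |u n x| ≤ c n)
    (hint1 : ∀ n, Integrable (fun x => Real.exp (γ * (u n x) ^ 2)) μ)
    (hint2 : ∀ n, Integrable (fun x => (u n x) ^ 2 * Real.exp (γ * (u n x) ^ 2)) μ)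
    (htrunc : ∀ τ : ℝ, τ ∈ Set.Ioo (0 : ℝ) 1 →
      Tendsto (fun n => ∫ x, Real.exp (γ * (min (u n x) (τ * c n)) ^ 2) ∂μ) atTop
        (nhds (μ Set.univ).toReal))
    (hS : Tendsto (fun n => ∫ x, Real.exp (γ * (u n x) ^ 2) ∂μ) atTop (nhds S))
    (hSgt : (μ Set.univ).toReal < S) :
    S - (μ Set.univ).toReal ≤
        Filter.liminf (fun n =>
          (∫ x, (u n x) ^ 2 * Real.exp (γ * (u n x) ^ 2) ∂μ) / (c n) ^ 2) atTop ∧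
      Tendsto (fun n =>
          c n / ∫ x, (u n x) ^ 2 * Real.exp (γ * (u n x) ^ 2) ∂μ) atTop (nhds 0) :=
  stmt_18_general μ γ S hγ u c hmeas hc hcsup hint1 hint2 htrunc hS hSgt
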